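/- For every (b₁,b₂) ∈ B (with b₃ = (b₁b₂)^(−1)) one has b₁³b₂³ − 1 > 0 and b₁⁴b₂⁴ + b₁b₂ − b₁² − b₂² > 0, and consequently G^S₋(b₁,b₃,b₂) ≥ 0. Hence, whenever moreover G^S₊(b₁,b₃,b₂) ≥ 0 (i.e., (b₁,b₂) lies in the existence region B_{S₃} of the S₃ Riemann ellipsoids), both N^S₊(b₁,b₃,b₂) and N^S₋(b₁,b₃,b₂) are well-defined real numbers. -/

import Mathlib

/-!
On `B` the inequality `b₂ > b₁^(-1/2)` squares to `b₁b₂² > 1`; together with `b₁ > b₂` this gives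
`b₁²b₂ > b₁b₂² > 1`, hence `b₁³b₂³ > 1`, and
`b₁⁴b₂⁴ + b₁b₂ − b₁² − b₂² = b₁²((b₁b₂²)² − 1) + b₂(b₁ − b₂) > 0`.
At `(b₁, b₃, b₂)` the coefficient of `C₁` in `G^S₋` is `b₃²` times this polynomial and the coefficient
of `C₂` is `b₁b₂ − b₃² > 0`, while `C₁, C₂ ≥ 0` as integrals of nonnegative functions.
-/

open Real MeasureTheory

/-- `C₁(x,y,z) = 2πg ∫₀^∞ s·((s+x²)(s+y²)(s+z²))^(−3/2) ds`. -/
noncomputable def riC1 (g x y z : ℝ) : ℝ :=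
  2 * π * g * ∫ s in Set.Ioi (0:ℝ),
    s * ((s + x ^ 2) * (s + y ^ 2) * (s + z ^ 2)) ^ (-(3:ℝ)/2)

/-- `C₂(x,y,z) = 2πg ∫₀^∞ s²·((s+x²)(s+y²)(s+z²))^(−3/2) ds`. -/
noncomputable def riC2 (g x y z : ℝ) : ℝ :=
  2 * π * g * ∫ s in Set.Ioi (0:ℝ),
    s ^ 2 * ((s + x ^ 2) * (s + y ^ 2) * (s + z ^ 2)) ^ (-(3:ℝ)/2)

/-- `G^S₊(x,y,z)`. -/
noncomputable def GSp (g x y z : ℝ) : ℝ :=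
  ((x - z) ^ 4 / (x * z)) *
    ((x * y ^ 2 * z + (x ^ 2 * y ^ 2 - x ^ 2 * z ^ 2 + y ^ 2 * z ^ 2)) * riC1 g x y z
      + (x * z + y ^ 2) * riC2 g x y z)

/-- `G^S₋(x,y,z)`. -/
noncomputable def GSm (g x y z : ℝ) : ℝ :=
  ((x + z) ^ 4 / (x * z)) *
    ((x * y ^ 2 * z - (x ^ 2 * y ^ 2 - x ^ 2 * z ^ 2 + y ^ 2 * z ^ 2)) * riC1 g x y z
      + (x * z - y ^ 2) * riC2 g x y z)

/-- `N^S₊(x,y,z) = ½(√G^S₊ + √G^S₋)`. -/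
noncomputable def NSp (g x y z : ℝ) : ℝ :=
  (Real.sqrt (GSp g x y z) + Real.sqrt (GSm g x y z)) / 2

/-- `N^S₋(x,y,z) = ½(√G^S₊ − √G^S₋)`. -/
noncomputable def NSm (g x y z : ℝ) : ℝ :=
  (Real.sqrt (GSp g x y z) - Real.sqrt (GSm g x y z)) / 2

/-- Membership in `B = {(b₁,b₂) : b₁ > b₂ > b₁^(−1/2) > 0}`. -/
def memB (b1 b2 : ℝ) : Prop := b2 < b1 ∧ (Real.sqrt b1)⁻¹ < b2 ∧ 0 < (Real.sqrt b1)⁻¹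

lemma riC1_nonneg {g : ℝ} (hg : 0 ≤ g) (x y z : ℝ) : 0 ≤ riC1 g x y z := by
  refine mul_nonneg (by positivity) (setIntegral_nonneg measurableSet_Ioi fun s (hs : 0 < s) => ?_)
  have : 0 < (s + x ^ 2) * (s + y ^ 2) * (s + z ^ 2) := by positivity
  positivity

lemma riC2_nonneg {g : ℝ} (hg : 0 ≤ g) (x y z : ℝ) : 0 ≤ riC2 g x y z := by
  refine mul_nonneg (by positivity) (setIntegral_nonneg measurableSet_Ioi fun s (hs : 0 < s) => ?_)
  have : 0 < (s + x ^ 2) * (s + y ^ 2) * (s + z ^ 2) := by positivity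
  positivity

lemma GSm_nonneg {g x y z : ℝ} (hg : 0 ≤ g) (hx : 0 < x) (hz : 0 < z)
    (h₁ : 0 ≤ x * y ^ 2 * z - (x ^ 2 * y ^ 2 - x ^ 2 * z ^ 2 + y ^ 2 * z ^ 2))
    (h₂ : 0 ≤ x * z - y ^ 2) : 0 ≤ GSm g x y z :=
  mul_nonneg (by positivity)
    (add_nonneg (mul_nonneg h₁ (riC1_nonneg hg x y z)) (mul_nonneg h₂ (riC2_nonneg hg x y z)))

lemma NSp_add_NSm (g x y z : ℝ) : NSp g x y z + NSm g x y z = √(GSp g x y z) := by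
  unfold NSp NSm; ring

lemma NSp_sub_NSm (g x y z : ℝ) : NSp g x y z - NSm g x y z = √(GSm g x y z) := by
  unfold NSp NSm; ring

namespace memB

variable {b1 b2 : ℝ}

lemma pos_left (h : memB b1 b2) : 0 < b1 :=
  sqrt_pos.mp (inv_pos.mp h.2.2)

lemma pos_right (h : memB b1 b2) : 0 < b2 :=
  h.2.2.trans h.2.1

lemma one_lt_mul_sq (h : memB b1 b2) : 1 < b1 * b2 ^ 2 := by
  have hsqrt : 1 < √b1 * b2 := (inv_lt_iff_one_lt_mul₀' (inv_pos.mp h.2.2)).mp h.2.1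
  have hsq : (√b1 * b2) ^ 2 = b1 * b2 ^ 2 := by rw [mul_pow, sq_sqrt h.pos_left.le]
  rw [← hsq]
  exact (one_lt_sq_iff₀ (by positivity [h.pos_right])).mpr hsqrt

end memB

lemma one_lt_cube_mul_cube {b1 b2 : ℝ} (h₂ : 0 < b2) (h₁₂ : b2 < b1) (h : 1 < b1 * b2 ^ 2) :
    1 < b1 ^ 3 * b2 ^ 3 := by
  have h' : 1 < b1 ^ 2 * b2 := by nlinarith
  calc 1 < (b1 ^ 2 * b2) * (b1 * b2 ^ 2) := one_lt_mul h'.le h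
    _ = b1 ^ 3 * b2 ^ 3 := by ring

lemma quartic_pos {b1 b2 : ℝ} (h₂ : 0 < b2) (h₁₂ : b2 < b1) (h : 1 < b1 * b2 ^ 2) :
    0 < b1 ^ 4 * b2 ^ 4 + b1 * b2 - b1 ^ 2 - b2 ^ 2 := by
  have hsq : 1 < (b1 * b2 ^ 2) ^ 2 := (one_lt_sq_iff₀ (by linarith)).mpr h
  have hb1 : 0 < b1 ^ 2 := by positivity [h₂.trans h₁₂]
  calc 0 < b1 ^ 2 * ((b1 * b2 ^ 2) ^ 2 - 1) + b2 * (b1 - b2) := by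
        have := mul_pos hb1 (sub_pos.mpr hsq)
        have := mul_pos h₂ (sub_pos.mpr h₁₂)
        linarith
    _ = b1 ^ 4 * b2 ^ 4 + b1 * b2 - b1 ^ 2 - b2 ^ 2 := by ring

lemma GSm_coeff₁_eq {b1 b2 : ℝ} (h₁ : b1 ≠ 0) (h₂ : b2 ≠ 0) :
    b1 * (b1 * b2)⁻¹ ^ 2 * b2 - (b1 ^ 2 * (b1 * b2)⁻¹ ^ 2 - b1 ^ 2 * b2 ^ 2 + (b1 * b2)⁻¹ ^ 2 * b2 ^ 2)
      = (b1 * b2)⁻¹ ^ 2 * (b1 ^ 4 * b2 ^ 4 + b1 * b2 - b1 ^ 2 - b2 ^ 2) := by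
  field_simp
  ring

lemma GSm_inv_mul_nonneg {g b1 b2 : ℝ} (hg : 0 ≤ g) (h₁ : 0 < b1) (h₂ : 0 < b2)
    (hprod : 1 < b1 * b2) (hquartic : 0 ≤ b1 ^ 4 * b2 ^ 4 + b1 * b2 - b1 ^ 2 - b2 ^ 2) :
    0 ≤ GSm g b1 (b1 * b2)⁻¹ b2 := by
  refine GSm_nonneg hg h₁ h₂ ?_ ?_
  · rw [GSm_coeff₁_eq h₁.ne' h₂.ne']
    positivity
  · have : (b1 * b2)⁻¹ ^ 2 < 1 :=
      pow_lt_one₀ (by positivity) (inv_lt_one_of_one_lt₀ hprod) two_ne_zero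
    linarith

/-- On `B` (with `b₃ = (b₁b₂)⁻¹`) one has `b₁³b₂³ − 1 > 0` and
`b₁⁴b₂⁴ + b₁b₂ − b₁² − b₂² > 0`, hence `G^S₋(b₁,b₃,b₂) ≥ 0`; consequently on the existence
region `B_{S₃}` (where moreover `G^S₊(b₁,b₃,b₂) ≥ 0`) both `N^S₊(b₁,b₃,b₂)` and
`N^S₋(b₁,b₃,b₂)` are well defined. -/
theorem stmt_4 (g b1 b2 b3 : ℝ) (hg : 0 < g) (hB : memB b1 b2) (hb3 : b3 = (b1 * b2)⁻¹) :
    0 < b1 ^ 3 * b2 ^ 3 - 1 ∧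
    0 < b1 ^ 4 * b2 ^ 4 + b1 * b2 - b1 ^ 2 - b2 ^ 2 ∧
    0 ≤ GSm g b1 b3 b2 ∧
    (0 ≤ GSp g b1 b3 b2 →
      Real.sqrt (GSp g b1 b3 b2) ^ 2 = GSp g b1 b3 b2 ∧
      Real.sqrt (GSm g b1 b3 b2) ^ 2 = GSm g b1 b3 b2 ∧
      NSp g b1 b3 b2 + NSm g b1 b3 b2 = Real.sqrt (GSp g b1 b3 b2) ∧
      NSp g b1 b3 b2 - NSm g b1 b3 b2 = Real.sqrt (GSm g b1 b3 b2)) := by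
  subst hb3
  have h₁ := hB.pos_left
  have h₂ := hB.pos_right
  have hcube := one_lt_cube_mul_cube h₂ hB.1 hB.one_lt_mul_sq
  have hquartic := quartic_pos h₂ hB.1 hB.one_lt_mul_sq
  have hprod : 1 < b1 * b2 := by
    rw [← mul_pow] at hcube
    exact (one_lt_pow_iff_of_nonneg (by positivity) three_ne_zero).mp hcube
  have hm := GSm_inv_mul_nonneg hg.le h₁ h₂ hprod hquartic.le
  exact ⟨sub_pos.mpr hcube, hquartic, hm, fun hp =>
    ⟨sq_sqrt hp, sq_sqrt hm, NSp_add_NSm .., NSp_sub_NSm ..⟩⟩
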